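/- Let α, β be real numbers with 0 < β < α ≤ 1, let 0 < θ < π, and suppose D(θ) = sin((−θ(β−3) + πβ)/2) + (β−1)·sin((θ + πβ − θβ)/2) ≠ 0. If there exists a real number a such that both cusp equations F(θ) = 0 and G(θ) = 0 hold, then θ satisfies (−2 + α + β − αβ)·sin((π−θ)(α−β)/2) + (β−1)·sin((θ(−2 + α − β) + π(β − α))/2) + (α−1)·sin((θ(2 + α − β) + π(β − α))/2) = 0. -/
import Mathlib


/-- F(θ) = γ₁'(θ), the derivative of the real part of the boundary curve. -/
noncomputable def F (a α β θ : ℝ) : ℝ :=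
  (2 : ℝ) ^ (α - 1) * α * Real.cos (θ / 2) * Real.cos (α * (Real.pi - θ) / 2 + θ) *
      Real.sin (θ / 2) ^ (α - 1)
    + (2 : ℝ) ^ (β - 1) * a * β * Real.cos (θ / 2) * Real.cos (β * (Real.pi - θ) / 2 + θ) *
        Real.sin (θ / 2) ^ (β - 1)
    - (2 : ℝ) ^ α * (1 - α / 2) * Real.sin (θ / 2) ^ α * Real.sin (α * (Real.pi - θ) / 2 + θ)
    - (2 : ℝ) ^ β * a * (1 - β / 2) * Real.sin (θ / 2) ^ β * Real.sin (β * (Real.pi - θ) / 2 + θ)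

/-- G(θ) = γ₂'(θ), the derivative of the imaginary part of the boundary curve. -/
noncomputable def G (a α β θ : ℝ) : ℝ :=
  (2 : ℝ) ^ α * (1 - α / 2) * Real.cos (α * (Real.pi - θ) / 2 + θ) * Real.sin (θ / 2) ^ α
    + (2 : ℝ) ^ β * a * (1 - β / 2) * Real.cos (β * (Real.pi - θ) / 2 + θ) * Real.sin (θ / 2) ^ β
    + (2 : ℝ) ^ (α - 1) * α * Real.cos (θ / 2) * Real.sin (θ / 2) ^ (α - 1) *
        Real.sin (α * (Real.pi - θ) / 2 + θ)
    + (2 : ℝ) ^ (β - 1) * a * β * Real.cos (θ / 2) * Real.sin (θ / 2) ^ (β - 1) *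
        Real.sin (β * (Real.pi - θ) / 2 + θ)

/-- Key algebraic identity behind the cusp equation. -/
lemma cusp_key (X1 Y1 X2 Y2 S C α β : ℝ) (h : S ^ 2 + C ^ 2 = 1) :
    (α * C * Y1 - (2 - α) * S * X1) * ((2 - β) * S * Y2 + β * C * X2)
      - (β * C * Y2 - (2 - β) * S * X2) * ((2 - α) * S * Y1 + α * C * X1)
    = (-2 + α + β - α * β) * (X1 * Y2 - Y1 * X2)
      + (β - 1) * ((X2 * Y1 - Y2 * X1) * (C ^ 2 - S ^ 2) - (Y1 * Y2 + X1 * X2) * (2 * S * C))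
      + (α - 1) * ((X2 * Y1 - Y2 * X1) * (C ^ 2 - S ^ 2) + (Y1 * Y2 + X1 * X2) * (2 * S * C)) := by
  linear_combination ((X1 * Y2 - Y1 * X2) * (α + β - 2 - α * β)) * h

/-- If both cusp equations F(θ) = 0 and G(θ) = 0 hold for some value of the
parameter a, then θ satisfies the transcendental equation (18) of the paper. -/
theorem cusp_theta_equation (α β θ : ℝ)
    (hβ : 0 < β) (hβα : β < α) (hα : α ≤ 1) (h0 : 0 < θ) (hπ : θ < Real.pi)
    (hD : Real.sin ((-(θ * (β - 3)) + Real.pi * β) / 2)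
        + (β - 1) * Real.sin ((θ + Real.pi * β - θ * β) / 2) ≠ 0)
    (ha : ∃ a : ℝ, F a α β θ = 0 ∧ G a α β θ = 0) :
    (-2 + α + β - α * β) * Real.sin ((Real.pi - θ) * (α - β) / 2)
      + (β - 1) * Real.sin ((θ * (-2 + α - β) + Real.pi * (β - α)) / 2)
      + (α - 1) * Real.sin ((θ * (2 + α - β) + Real.pi * (β - α)) / 2) = 0 := by
  obtain ⟨a, hF, hG⟩ := ha
  set s := Real.sin (θ / 2) with hs_def
  set c := Real.cos (θ / 2) with hc_def
  have hs : 0 < s := Real.sin_pos_of_pos_of_lt_pi (by linarith) (by linarith [Real.pi_pos])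
  set X1 := Real.sin (α * (Real.pi - θ) / 2 + θ) with hX1
  set Y1 := Real.cos (α * (Real.pi - θ) / 2 + θ) with hY1
  set X2 := Real.sin (β * (Real.pi - θ) / 2 + θ) with hX2
  set Y2 := Real.cos (β * (Real.pi - θ) / 2 + θ) with hY2
  have hpyth : s ^ 2 + c ^ 2 = 1 := Real.sin_sq_add_cos_sq (θ / 2)
  set A := (2 : ℝ) ^ (α - 1) * s ^ (α - 1) with hA_def
  set B := (2 : ℝ) ^ (β - 1) * s ^ (β - 1) with hB_def
  have hApos : 0 < A := mul_pos (Real.rpow_pos_of_pos two_pos _) (Real.rpow_pos_of_pos hs _)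
  have hBpos : 0 < B := mul_pos (Real.rpow_pos_of_pos two_pos _) (Real.rpow_pos_of_pos hs _)
  have h2α : (2 : ℝ) ^ α = (2 : ℝ) ^ (α - 1) * 2 := by
    have h := Real.rpow_add two_pos (α - 1) 1
    rw [show α - 1 + 1 = α by ring, Real.rpow_one] at h; exact h
  have h2β : (2 : ℝ) ^ β = (2 : ℝ) ^ (β - 1) * 2 := by
    have h := Real.rpow_add two_pos (β - 1) 1
    rw [show β - 1 + 1 = β by ring, Real.rpow_one] at h; exact h
  have hsα : s ^ α = s ^ (α - 1) * s := by
    have h := Real.rpow_add hs (α - 1) 1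
    rw [show α - 1 + 1 = α by ring, Real.rpow_one] at h; exact h
  have hsβ : s ^ β = s ^ (β - 1) * s := by
    have h := Real.rpow_add hs (β - 1) 1
    rw [show β - 1 + 1 = β by ring, Real.rpow_one] at h; exact h
  have hF' : A * (α * c * Y1 - (2 - α) * s * X1)
      + a * (B * (β * c * Y2 - (2 - β) * s * X2)) = 0 := by
    have := hF
    rw [F] at this
    rw [hA_def, hB_def]
    linear_combination this + (1 - α / 2) * X1 * s ^ (α - 1) * s * h2α
      + a * (1 - β / 2) * X2 * s ^ (β - 1) * s * h2β
      + (2 : ℝ) ^ α * (1 - α / 2) * X1 * hsα + (2 : ℝ) ^ β * a * (1 - β / 2) * X2 * hsβ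
  have hG' : A * ((2 - α) * s * Y1 + α * c * X1)
      + a * (B * ((2 - β) * s * Y2 + β * c * X2)) = 0 := by
    have := hG
    rw [G] at this
    rw [hA_def, hB_def]
    linear_combination this - (1 - α / 2) * Y1 * s ^ (α - 1) * s * h2α
      - a * (1 - β / 2) * Y2 * s ^ (β - 1) * s * h2β
      - (2 : ℝ) ^ α * (1 - α / 2) * Y1 * hsα - (2 : ℝ) ^ β * a * (1 - β / 2) * Y2 * hsβ
  have hdet : A * B * ((α * c * Y1 - (2 - α) * s * X1) * ((2 - β) * s * Y2 + β * c * X2)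
      - (β * c * Y2 - (2 - β) * s * X2) * ((2 - α) * s * Y1 + α * c * X1)) = 0 := by
    linear_combination (B * ((2 - β) * s * Y2 + β * c * X2)) * hF'
      - (B * (β * c * Y2 - (2 - β) * s * X2)) * hG'
  have hzero : (α * c * Y1 - (2 - α) * s * X1) * ((2 - β) * s * Y2 + β * c * X2)
      - (β * c * Y2 - (2 - β) * s * X2) * ((2 - α) * s * Y1 + α * c * X1) = 0 := by
    have hAB : A * B ≠ 0 := ne_of_gt (mul_pos hApos hBpos)
    exact (mul_eq_zero.mp hdet).resolve_left hAB
  have hcosθ : Real.cos θ = c ^ 2 - s ^ 2 := by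
    rw [show θ = 2 * (θ / 2) by ring, Real.cos_two_mul']
  have hsinθ : Real.sin θ = 2 * s * c := by
    rw [show θ = 2 * (θ / 2) by ring, Real.sin_two_mul]
  have hsin1 : Real.sin ((Real.pi - θ) * (α - β) / 2) = X1 * Y2 - Y1 * X2 := by
    rw [show (Real.pi - θ) * (α - β) / 2
        = (α * (Real.pi - θ) / 2 + θ) - (β * (Real.pi - θ) / 2 + θ) by ring, Real.sin_sub]
  have hsin2 : Real.sin ((θ * (-2 + α - β) + Real.pi * (β - α)) / 2)
      = (X2 * Y1 - Y2 * X1) * (c ^ 2 - s ^ 2) - (Y1 * Y2 + X1 * X2) * (2 * s * c) := by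
    rw [show (θ * (-2 + α - β) + Real.pi * (β - α)) / 2
        = ((β * (Real.pi - θ) / 2 + θ) - (α * (Real.pi - θ) / 2 + θ)) - θ by ring,
      Real.sin_sub, Real.sin_sub, Real.cos_sub, hcosθ, hsinθ]
    ring
  have hsin3 : Real.sin ((θ * (2 + α - β) + Real.pi * (β - α)) / 2)
      = (X2 * Y1 - Y2 * X1) * (c ^ 2 - s ^ 2) + (Y1 * Y2 + X1 * X2) * (2 * s * c) := by
    rw [show (θ * (2 + α - β) + Real.pi * (β - α)) / 2
        = ((β * (Real.pi - θ) / 2 + θ) - (α * (Real.pi - θ) / 2 + θ)) + θ by ring,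
      Real.sin_add, Real.sin_sub, Real.cos_sub, hcosθ, hsinθ]
    ring
  rw [hsin1, hsin2, hsin3]
  linear_combination hzero - cusp_key X1 Y1 X2 Y2 s c α β hpyth
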